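/- Let Φ be m×n with RIP constant δ = δ_{|I₁|+|I₂|} < 1/2, and let A_{I₁} = P^⊥_{I₁} Φ where P^⊥_{I₁} is the orthogonal projection onto the complement of the column span of Φ_{I₁}. Then for any u ∈ ℝⁿ with supp(u) ⊆ I₂ and I₁ ∩ I₂ = ∅: (1 - δ/(1-δ))‖u‖₂² ≤ ‖A_{I₁} u‖₂² ≤ (1+δ)‖u‖₂². -/

import Mathlib

/-!
Since `P_{I₁}` maps into the column span of `Φ_{I₁}`, the residual `A_{I₁} u = Φ u - P_{I₁} Φ u`
equals `Φ (u - w)` for some `w` supported on `I₁`. As `u` is supported on the disjoint set `I₂`,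
the RIP of order `|I₁| + |I₂|` gives `‖A_{I₁} u‖² ≥ (1 - δ) ‖u - w‖² ≥ (1 - δ) ‖u‖²`, and
`1 - δ ≥ 1 - δ/(1-δ)`. The upper bound holds because the orthogonal projector `P^⊥_{I₁}` does not
increase norms.
-/

open Matrix BigOperators Finset

/-- squared Euclidean norm -/
noncomputable def n2sq {α : Type*} [Fintype α] (v : α → ℝ) : ℝ := ∑ i, (v i)^2

/-- Euclidean norm -/
noncomputable def n2 {α : Type*} [Fintype α] (v : α → ℝ) : ℝ := Real.sqrt (n2sq v)

/-- sup norm -/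
noncomputable def ninf {α : Type*} [Fintype α] (v : α → ℝ) : ℝ := ⨆ i, |v i|

/-- dot product -/
def dot {α : Type*} [Fintype α] (u v : α → ℝ) : ℝ := ∑ i, u i * v i

/-- column submatrix indexed by a finite index set -/
noncomputable def subCols {m n : ℕ} (Φ : Matrix (Fin m) (Fin n) ℝ) (I : Finset (Fin n)) :
    Matrix (Fin m) {j // j ∈ I} ℝ := Matrix.of fun i j => Φ i j.1

/-- restriction of a vector to an index set -/
def restrict {n : ℕ} (x : Fin n → ℝ) (I : Finset (Fin n)) : {j // j ∈ I} → ℝ :=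
  fun j => x j.1

/-- Moore–Penrose pseudoinverse (full column rank case) -/
noncomputable def pinv {m n : ℕ} (Φ : Matrix (Fin m) (Fin n) ℝ) (I : Finset (Fin n)) :
    Matrix {j // j ∈ I} (Fin m) ℝ :=
  ((subCols Φ I)ᵀ * subCols Φ I)⁻¹ * (subCols Φ I)ᵀ

/-- orthogonal projector onto the column span of `Φ_I` -/
noncomputable def proj {m n : ℕ} (Φ : Matrix (Fin m) (Fin n) ℝ) (I : Finset (Fin n)) :
    Matrix (Fin m) (Fin m) ℝ := subCols Φ I * pinv Φ I

/-- projector onto the orthogonal complement of the column span of `Φ_I` -/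
noncomputable def projPerp {m n : ℕ} (Φ : Matrix (Fin m) (Fin n) ℝ) (I : Finset (Fin n)) :
    Matrix (Fin m) (Fin m) ℝ := 1 - proj Φ I

/-- restricted isometry property of order `K` with constant `δ` -/
def RIP {m n : ℕ} (Φ : Matrix (Fin m) (Fin n) ℝ) (K : ℕ) (δ : ℝ) : Prop :=
  ∀ I : Finset (Fin n), I.card ≤ K → ∀ q : {j // j ∈ I} → ℝ,
    (1 - δ) * n2sq q ≤ n2sq ((subCols Φ I).mulVec q) ∧
    n2sq ((subCols Φ I).mulVec q) ≤ (1 + δ) * n2sq q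

section Support

variable {n : ℕ} (I : Finset (Fin n))

def extendByZero (c : {j // j ∈ I} → ℝ) : Fin n → ℝ :=
  fun j => if hj : j ∈ I then c ⟨j, hj⟩ else 0

variable {I}

lemma extendByZero_eq_zero_of_notMem (c : {j // j ∈ I} → ℝ) {j : Fin n} (hj : j ∉ I) :
    extendByZero I c j = 0 :=
  dif_neg hj

lemma mem_of_extendByZero_ne_zero (c : {j // j ∈ I} → ℝ) {j : Fin n}
    (hj : extendByZero I c j ≠ 0) : j ∈ I :=
  not_imp_comm.mp (extendByZero_eq_zero_of_notMem c) hj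

lemma extendByZero_restrict {x : Fin n → ℝ} (hx : ∀ j, x j ≠ 0 → j ∈ I) :
    extendByZero I (fun j => x j) = x := by
  funext j
  by_cases hj : j ∈ I
  · simp [extendByZero, hj]
  · rw [extendByZero_eq_zero_of_notMem _ hj]
    exact (not_imp_comm.mp (hx j) hj).symm

lemma sum_subtype_eq_sum_of_support {M : Type*} [AddCommMonoid M] {f : Fin n → M}
    (hf : ∀ j, j ∉ I → f j = 0) : ∑ j : {j // j ∈ I}, f j = ∑ j, f j := by
  rw [Finset.sum_coe_sort]
  exact Finset.sum_subset (Finset.subset_univ I) fun j _ hj => hf j hj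

lemma n2sq_restrict {x : Fin n → ℝ} (hx : ∀ j, x j ≠ 0 → j ∈ I) :
    n2sq (fun j : {j // j ∈ I} => x j) = n2sq x :=
  sum_subtype_eq_sum_of_support (f := fun j => x j ^ 2) fun j hj => by
    simp [not_imp_comm.mp (hx j) hj]

lemma subCols_mulVec {m : ℕ} (Φ : Matrix (Fin m) (Fin n) ℝ) (c : {j // j ∈ I} → ℝ) :
    subCols Φ I *ᵥ c = Φ *ᵥ extendByZero I c := by
  funext i
  refine Eq.trans ?_ (sum_subtype_eq_sum_of_support fun j hj => by
    rw [extendByZero_eq_zero_of_notMem c hj, mul_zero])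
  simp [mulVec, dotProduct, subCols, extendByZero]

end Support

lemma n2sq_nonneg {α : Type*} [Fintype α] (v : α → ℝ) : 0 ≤ n2sq v :=
  Finset.sum_nonneg fun _ _ => sq_nonneg _

lemma n2sq_eq_dotProduct {α : Type*} [Fintype α] (v : α → ℝ) : n2sq v = v ⬝ᵥ v := by
  simp [n2sq, dotProduct, sq]

lemma n2sq_le_n2sq_sub {α : Type*} [Fintype α] {u w : α → ℝ} (h : ∀ j, u j = 0 ∨ w j = 0) :
    n2sq u ≤ n2sq (u - w) :=
  Finset.sum_le_sum fun j _ => by rcases h j with h | h <;> simp [h, sq_nonneg]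

lemma n2sq_sub_mulVec_le {ι : Type*} [Fintype ι] {P : Matrix ι ι ℝ} (hsymm : Pᵀ = P)
    (hidem : P * P = P) (v : ι → ℝ) : n2sq (v - P *ᵥ v) ≤ n2sq v := by
  have hPv : (P *ᵥ v) ⬝ᵥ (P *ᵥ v) = v ⬝ᵥ (P *ᵥ v) := by
    rw [dotProduct_mulVec, ← mulVec_transpose, hsymm, mulVec_mulVec, hidem, dotProduct_comm]
  have hnonneg : 0 ≤ (P *ᵥ v) ⬝ᵥ (P *ᵥ v) := by
    rw [← n2sq_eq_dotProduct]; exact n2sq_nonneg _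
  rw [n2sq_eq_dotProduct, n2sq_eq_dotProduct, sub_dotProduct, dotProduct_sub, dotProduct_sub,
    dotProduct_comm (P *ᵥ v) v, hPv]
  linarith

lemma RIP.bounds_of_support {m n K : ℕ} {Φ : Matrix (Fin m) (Fin n) ℝ} {δ : ℝ} (h : RIP Φ K δ)
    {S : Finset (Fin n)} (hS : S.card ≤ K) {x : Fin n → ℝ} (hx : ∀ j, x j ≠ 0 → j ∈ S) :
    (1 - δ) * n2sq x ≤ n2sq (Φ *ᵥ x) ∧ n2sq (Φ *ᵥ x) ≤ (1 + δ) * n2sq x := by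
  simpa only [subCols_mulVec, extendByZero_restrict hx, n2sq_restrict hx] using h S hS (fun j => x j)

section Projection

variable {m n : ℕ} {Φ : Matrix (Fin m) (Fin n) ℝ} {I : Finset (Fin n)}

lemma proj_transpose : (proj Φ I)ᵀ = proj Φ I := by
  simp only [proj, pinv, transpose_mul, transpose_nonsing_inv, transpose_transpose, Matrix.mul_assoc]

lemma proj_mul_self (hrank : IsUnit ((subCols Φ I)ᵀ * subCols Φ I)) :
    proj Φ I * proj Φ I = proj Φ I := by
  have hG := (isUnit_iff_isUnit_det _).mp hrank
  simp only [proj, pinv, Matrix.mul_assoc]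
  rw [← Matrix.mul_assoc (subCols Φ I)ᵀ, ← Matrix.mul_assoc _ ((subCols Φ I)ᵀ * subCols Φ I),
    nonsing_inv_mul _ hG, Matrix.one_mul]

end Projection

theorem modified_rip_general {m n : ℕ} (Φ : Matrix (Fin m) (Fin n) ℝ)
    (I₁ I₂ : Finset (Fin n)) (hdisj : Disjoint I₁ I₂)
    (δ : ℝ) (hδ : δ < 1/2)
    (hrank : IsUnit ((subCols Φ I₁)ᵀ * subCols Φ I₁))
    (h : RIP Φ (I₁.card + I₂.card) δ)
    (u : Fin n → ℝ) (hsupp : ∀ j, u j ≠ 0 → j ∈ I₂) :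
    (1 - δ/(1-δ)) * n2sq u ≤ n2sq ((projPerp Φ I₁ * Φ).mulVec u) ∧
    n2sq ((projPerp Φ I₁ * Φ).mulVec u) ≤ (1 + δ) * n2sq u := by
  set w := extendByZero I₁ (pinv Φ I₁ *ᵥ (Φ *ᵥ u))
  have hAu : (projPerp Φ I₁ * Φ) *ᵥ u = Φ *ᵥ u - proj Φ I₁ *ᵥ (Φ *ᵥ u) := by
    rw [projPerp, ← mulVec_mulVec, sub_mulVec, one_mulVec]
  have hAu_residual : (projPerp Φ I₁ * Φ) *ᵥ u = Φ *ᵥ (u - w) := by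
    rw [hAu, mulVec_sub, proj, ← mulVec_mulVec, subCols_mulVec]
  have hw : ∀ j, w j ≠ 0 → j ∈ I₁ := fun j => mem_of_extendByZero_ne_zero _
  have hsep : ∀ j, u j = 0 ∨ w j = 0 := fun j => by
    by_contra! hj
    exact Finset.disjoint_left.mp hdisj (hw j hj.2) (hsupp j hj.1)
  have hsupp' : ∀ j, (u - w) j ≠ 0 → j ∈ I₁ ∪ I₂ := fun j hj => by
    rcases hsep j with h0 | h0
    · exact Finset.mem_union_left _ (hw j fun hw0 => hj (by simp [h0, hw0]))
    · exact Finset.mem_union_right _ (hsupp j fun hu0 => hj (by simp [h0, hu0]))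
  have hδ_le : δ ≤ δ / (1 - δ) := by
    rw [le_div_iff₀ (by linarith)]; nlinarith [sq_nonneg δ]
  constructor
  · calc (1 - δ / (1 - δ)) * n2sq u ≤ (1 - δ) * n2sq u :=
          mul_le_mul_of_nonneg_right (by linarith) (n2sq_nonneg u)
      _ ≤ (1 - δ) * n2sq (u - w) :=
          mul_le_mul_of_nonneg_left (n2sq_le_n2sq_sub hsep) (by linarith)
      _ ≤ n2sq (Φ *ᵥ (u - w)) := (h.bounds_of_support (card_union_le I₁ I₂) hsupp').1
      _ = n2sq ((projPerp Φ I₁ * Φ) *ᵥ u) := by rw [hAu_residual]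
  · calc n2sq ((projPerp Φ I₁ * Φ) *ᵥ u) ≤ n2sq (Φ *ᵥ u) := by
          rw [hAu]; exact n2sq_sub_mulVec_le proj_transpose (proj_mul_self hrank) _
      _ ≤ (1 + δ) * n2sq u := (h.bounds_of_support (Nat.le_add_left _ _) hsupp).2

/-- modified RIP for `A_{I₁} = P^⊥_{I₁}Φ` on vectors supported on `I₂`:
`(1 - δ/(1-δ))‖u‖₂² ≤ ‖A_{I₁}u‖₂² ≤ (1+δ)‖u‖₂²`. -/
theorem modified_rip {m n : ℕ} (Φ : Matrix (Fin m) (Fin n) ℝ)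
    (I₁ I₂ : Finset (Fin n)) (hdisj : Disjoint I₁ I₂)
    (δ : ℝ) (hδ0 : 0 < δ) (hδ : δ < 1/2)
    (hrank : IsUnit ((subCols Φ I₁)ᵀ * subCols Φ I₁))
    (h : RIP Φ (I₁.card + I₂.card) δ)
    (u : Fin n → ℝ) (hsupp : ∀ j, u j ≠ 0 → j ∈ I₂) :
    (1 - δ/(1-δ)) * n2sq u ≤ n2sq ((projPerp Φ I₁ * Φ).mulVec u) ∧
    n2sq ((projPerp Φ I₁ * Φ).mulVec u) ≤ (1 + δ) * n2sq u :=
  modified_rip_general Φ I₁ I₂ hdisj δ hδ hrank h u hsupp
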